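/- Let q = 4 and f = S_a + S_b + S_e + X²S_e² + S_bS_e³ ∈ F_{q^e}[X], where a, b, e are positive integers. If 2 | (a+e), gcd(e, a−b) = 1, and gcd( (X^{2a}+X³+X+1)/(X+1)², (X^e+1)/(X+1) ) = 1 in F_4[X], then f is a permutation polynomial of F_{4^e}. -/

import Mathlib

/-!
Write `S_d` also for the `𝔽₂`-linear map `x ↦ ∑_{i<d} x^(4^i)`, so that `T = S_e` is the trace
onto `𝔽₄`. Using `2 ∣ a + e` one checks `T (f x) = T x`. Hence if `f x = f y`, then `z = x + y`
satisfies `T z = 0` and, with `t = T x ∈ 𝔽₄`, `S_a z + S_b z + t² z² + t³ S_b z = 0`.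

If `t = 0`, then `S_a z = S_b z`, hence `S_c z = 0` for `c = |a - b|`, because
`S_{b+c} z = S_b z + (S_c z)^(4^b)`. Since `S_c z = 0` forces `z^(4^c) = z`, and likewise for `e`,
`gcd(c, e) = 1` makes `z` fixed by `x ↦ x^4`; then `c z = e z = 0` with `c` or `e` odd, so `z = 0`.

If `t ≠ 0`, then `t³ = 1` and `z⁴ = S_a (S_a z)`. Let a polynomial over `𝔽₂` act through the
Frobenius `x ↦ x²` (its `2`-linearized associate). Then `u²` acts as `z ↦ z⁴ + S_a (S_a z)` and
`v²` acts as `T`, so `z` lies in the kernels of two coprime polynomials and `z = 0`.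
-/

open Polynomial Finset

theorem pow_pow_of_pow_eq_self {M : Type*} [Monoid M] {t : M} {k : ℕ} (ht : t ^ k = t) (n : ℕ) :
    t ^ k ^ n = t := by
  rw [← congrFun (pow_iterate k n) t]
  exact Function.IsFixedPt.iterate ht n

theorem CharTwo.geom_sum_mul {R : Type*} [Ring R] [CharP R 2] (x : R) (n : ℕ) :
    (∑ i ∈ range n, x ^ i) * (x + 1) = x ^ n + 1 := by
  simpa [CharTwo.sub_eq_add] using _root_.geom_sum_mul x n

theorem charP_two_of_card_eq_four_pow (E : Type*) [Field E] [Fintype E] {e : ℕ}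
    (hE : Fintype.card E = 4 ^ e) : CharP E 2 := by
  have h := FiniteField.cast_card_eq_zero E
  rw [hE, Nat.cast_pow, show ((4 : ℕ) : E) = 2 ^ 2 by norm_num, ← pow_mul] at h
  exact CharTwo.of_one_ne_zero_of_two_eq_zero one_ne_zero (pow_eq_zero_iff'.mp h).1

namespace CharTwoLinearized

variable {K : Type*} [Field K] [Algebra (ZMod 2) K]

instance : CharP K 2 := charP_of_injective_algebraMap' (ZMod 2) 2

variable (K) in
noncomputable abbrev frob : Module.End (ZMod 2) K :=
  (FiniteField.frobeniusAlgHom (ZMod 2) K).toLinearMap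

theorem frob_pow_apply (n : ℕ) (x : K) : (frob K ^ n) x = x ^ 2 ^ n := by
  rw [Module.End.pow_apply]
  simp [FiniteField.coe_frobeniusAlgHom, pow_iterate]

theorem frob_sq_pow_apply (n : ℕ) (x : K) : ((frob K ^ 2) ^ n) x = x ^ 4 ^ n := by
  rw [← pow_mul, frob_pow_apply, pow_mul]
  norm_num

variable (K) in
noncomputable def partialTrace (d : ℕ) : Module.End (ZMod 2) K :=
  aeval (frob K ^ 2) (∑ i ∈ range d, X ^ i : (ZMod 2)[X])

theorem partialTrace_apply (d : ℕ) (x : K) :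
    partialTrace K d x = ∑ i ∈ range d, x ^ 4 ^ i := by
  simp only [partialTrace, map_sum, map_pow, aeval_X, LinearMap.sum_apply, frob_sq_pow_apply]

theorem aeval_frob_geom_sum_sq (d : ℕ) :
    aeval (frob K) ((∑ i ∈ range d, X ^ i : (ZMod 2)[X]) ^ 2) = partialTrace K d := by
  rw [← ZMod.expand_card, expand_aeval, partialTrace]

theorem partialTrace_add (b c : ℕ) (x : K) :
    partialTrace K (b + c) x = partialTrace K b x + partialTrace K c x ^ 4 ^ b := by
  have hsplit : (∑ i ∈ range (b + c), X ^ i : (ZMod 2)[X]) =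
      ∑ i ∈ range b, X ^ i + X ^ b * ∑ i ∈ range c, X ^ i := by
    simp only [sum_range_add, mul_sum, pow_add]
  rw [partialTrace, hsplit, map_add, map_mul, map_pow, aeval_X, LinearMap.add_apply,
    Module.End.mul_apply, frob_sq_pow_apply]
  rfl

theorem pow_four_partialTrace_add (d : ℕ) (x : K) :
    partialTrace K d x ^ 4 + partialTrace K d x = x ^ 4 ^ d + x := by
  have h := partialTrace_add d 1 x
  rw [add_comm d 1, partialTrace_add 1 d x] at h
  simp only [partialTrace_apply, sum_range_one, pow_zero, pow_one] at h ⊢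
  linear_combination h + (∑ i ∈ range d, x ^ 4 ^ i - x) * CharTwo.two_eq_zero (R := K)

theorem partialTrace_sq (d : ℕ) (x : K) : partialTrace K d (x ^ 2) = partialTrace K d x ^ 2 := by
  simp only [partialTrace_apply, CharTwo.sum_sq, pow_right_comm]

theorem partialTrace_of_pow_four {y : K} (hy : y ^ 4 = y) (d : ℕ) :
    partialTrace K d y = d * y := by
  simp [partialTrace_apply, pow_pow_of_pow_eq_self hy]

theorem partialTrace_mul_of_pow_four {t : K} (ht : t ^ 4 = t) (d : ℕ) (y : K) :
    partialTrace K d (t * y) = t * partialTrace K d y := by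
  simp [partialTrace_apply, mul_pow, pow_pow_of_pow_eq_self ht, mul_sum]

theorem partialTrace_comm (c d : ℕ) (x : K) :
    partialTrace K c (partialTrace K d x) = partialTrace K d (partialTrace K c x) := by
  simp only [partialTrace, ← Module.End.mul_apply, ← map_mul, mul_comm]

theorem pow_four_pow_eq_self_of_partialTrace_eq_zero {d : ℕ} {x : K}
    (h : partialTrace K d x = 0) : x ^ 4 ^ d = x := by
  have := pow_four_partialTrace_add d x
  rw [h, zero_pow four_ne_zero, add_zero, eq_comm, CharTwo.add_eq_zero] at this
  exact this

theorem eq_zero_of_partialTrace_eq_zero {c d : ℕ} (hcd : Nat.Coprime c d) {w : K}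
    (hc : partialTrace K c w = 0) (hd : partialTrace K d w = 0) : w = 0 := by
  have hperiodic {n : ℕ} (hn : partialTrace K n w = 0) : Function.IsPeriodicPt (· ^ 4) n w := by
    rw [Function.IsPeriodicPt, Function.IsFixedPt, pow_iterate]
    exact pow_four_pow_eq_self_of_partialTrace_eq_zero hn
  have hfixed : w ^ 4 = w := by
    simpa [hcd.gcd_eq_one, Function.IsPeriodicPt, Function.IsFixedPt] using
      (hperiodic hc).gcd (hperiodic hd)
  rw [partialTrace_of_pow_four hfixed] at hc hd
  by_contra hw
  have hc2 : 2 ∣ c := (CharP.cast_eq_zero_iff K 2 c).mp ((mul_eq_zero.mp hc).resolve_right hw)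
  have hd2 : 2 ∣ d := (CharP.cast_eq_zero_iff K 2 d).mp ((mul_eq_zero.mp hd).resolve_right hw)
  exact Nat.not_coprime_of_dvd_of_dvd one_lt_two hc2 hd2 hcd

theorem eq_zero_of_partialTrace_eq {a b e : ℕ} (hab : Nat.Coprime e (a - b : ℤ).natAbs) {z : K}
    (h : partialTrace K a z = partialTrace K b z) (he : partialTrace K e z = 0) : z = 0 := by
  wlog hba : b ≤ a generalizing a b
  · exact this (by rwa [← Int.natAbs_neg, neg_sub]) h.symm (by omega)
  obtain ⟨c, rfl⟩ := Nat.exists_eq_add_of_le hba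
  rw [partialTrace_add, add_eq_left, pow_eq_zero_iff (by positivity)] at h
  refine eq_zero_of_partialTrace_eq_zero (Nat.Coprime.symm ?_) h he
  simpa using hab

theorem eq_zero_of_isCoprime {a e : ℕ}
    (huv : IsCoprime (X + (∑ i ∈ range a, X ^ i) ^ 2 : (ZMod 2)[X]) (∑ i ∈ range e, X ^ i))
    {z : K} (hz : z ^ 4 = partialTrace K a (partialTrace K a z)) (he : partialTrace K e z = 0) :
    z = 0 := by
  have hu : aeval (frob K) ((X + (∑ i ∈ range a, X ^ i) ^ 2 : (ZMod 2)[X]) ^ 2) z = 0 := by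
    rw [CharTwo.add_sq, map_add, map_pow, map_pow, aeval_X, aeval_frob_geom_sum_sq,
      LinearMap.add_apply, frob_pow_apply, pow_two (partialTrace K a), Module.End.mul_apply, ← hz]
    exact CharTwo.add_self_eq_zero _
  have hv : aeval (frob K) ((∑ i ∈ range e, X ^ i : (ZMod 2)[X]) ^ 2) z = 0 := by
    rwa [aeval_frob_geom_sum_sq]
  exact Submodule.disjoint_def.mp
    (disjoint_ker_aeval_of_isCoprime (frob K) (huv.pow (m := 2) (n := 2))) z hu hv

variable (K) in
noncomputable def fMap (a b e : ℕ) (x : K) : K :=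
  partialTrace K a x + partialTrace K b x + partialTrace K e x +
    x ^ 2 * partialTrace K e x ^ 2 + partialTrace K b x * partialTrace K e x ^ 3

theorem pow_four_partialTrace {e : ℕ} (hK : ∀ x : K, x ^ 4 ^ e = x) (x : K) :
    partialTrace K e x ^ 4 = partialTrace K e x := by
  have := pow_four_partialTrace_add e x
  rwa [hK, CharTwo.add_self_eq_zero, CharTwo.add_eq_zero] at this

theorem partialTrace_fMap {a b e : ℕ} (hK : ∀ x : K, x ^ 4 ^ e = x) (hae : 2 ∣ a + e) (x : K) :
    partialTrace K e (fMap K a b e x) = partialTrace K e x := by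
  set t := partialTrace K e x with ht_def
  have ht : t ^ 4 = t := pow_four_partialTrace hK x
  have htn (n : ℕ) : (t ^ n) ^ 4 = t ^ n := by rw [← pow_mul, mul_comm, pow_mul, ht]
  have hS (d : ℕ) : partialTrace K e (partialTrace K d x) = d * t := by
    rw [partialTrace_comm, partialTrace_of_pow_four ht]
  have hae' : (a : K) + e = 0 := by exact_mod_cast (CharP.cast_eq_zero_iff K 2 _).mpr hae
  rw [fMap, ← ht_def, mul_comm (x ^ 2), mul_comm (partialTrace K b x)]
  simp only [map_add, partialTrace_mul_of_pow_four (htn _), partialTrace_sq, hS,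
    partialTrace_of_pow_four ht]
  linear_combination t * hae' + (1 + b) * ht + ((b : K) * t) * CharTwo.two_eq_zero (R := K)

theorem pow_four_eq_partialTrace_partialTrace {a : ℕ} {t z : K} (ht3 : t ^ 3 = 1)
    (h : partialTrace K a z = t ^ 2 * z ^ 2) : z ^ 4 = partialTrace K a (partialTrace K a z) := by
  have ht2 : (t ^ 2) ^ 4 = t ^ 2 := by
    rw [← pow_mul, show 2 * 4 = 3 * 2 + 2 by rfl, pow_add, pow_mul, ht3, one_pow, one_mul]
  calc z ^ 4 = (t ^ 3) ^ 2 * z ^ 4 := by rw [ht3, one_pow, one_mul]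
    _ = t ^ 2 * (t ^ 2 * z ^ 2) ^ 2 := by ring
    _ = partialTrace K a (partialTrace K a z) := by
      rw [h, partialTrace_mul_of_pow_four ht2, partialTrace_sq, h]

theorem fMap_injective {a b e : ℕ} (hK : ∀ x : K, x ^ 4 ^ e = x) (hae : 2 ∣ a + e)
    (hab : Nat.Coprime e (a - b : ℤ).natAbs)
    (huv : IsCoprime (X + (∑ i ∈ range a, X ^ i) ^ 2 : (ZMod 2)[X]) (∑ i ∈ range e, X ^ i)) :
    Function.Injective (fMap K a b e) := by
  intro x y hxy
  set t := partialTrace K e x with ht_def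
  have hty : partialTrace K e y = t := by
    rw [← partialTrace_fMap hK hae y, ← hxy, partialTrace_fMap hK hae]
  rw [← CharTwo.add_eq_zero]
  set z := x + y
  have hz : partialTrace K e z = 0 := by
    rw [map_add, hty, CharTwo.add_self_eq_zero]
  have hkey : partialTrace K a z + partialTrace K b z + z ^ 2 * t ^ 2 +
      partialTrace K b z * t ^ 3 = 0 := by
    simp only [fMap, ← ht_def, hty] at hxy
    simp only [z, map_add, CharTwo.add_sq]
    linear_combination hxy + (partialTrace K a y + partialTrace K b y + y ^ 2 * t ^ 2 +
      partialTrace K b y * t ^ 3) * CharTwo.two_eq_zero (R := K)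
  rcases eq_or_ne t 0 with ht0 | ht0
  · rw [ht0, zero_pow two_ne_zero, zero_pow three_ne_zero, mul_zero, mul_zero, add_zero,
      add_zero, CharTwo.add_eq_zero] at hkey
    exact eq_zero_of_partialTrace_eq hab hkey hz
  · have ht : t ^ 4 = t := pow_four_partialTrace hK x
    have ht3 : t ^ 3 = 1 := by
      rw [← mul_left_inj' ht0, one_mul, ← pow_succ, ht]
    have hSa : partialTrace K a z = t ^ 2 * z ^ 2 := by
      rw [ht3, mul_one, add_right_comm, CharTwo.add_cancel_right, CharTwo.add_eq_zero,
        mul_comm] at hkey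
      exact hkey
    exact eq_zero_of_isCoprime huv (pow_four_eq_partialTrace_partialTrace ht3 hSa) hz

end CharTwoLinearized

open CharTwoLinearized in
theorem stmt19_general (e a b : ℕ)
    (E : Type*) [Field E] [Fintype E] (hE : Fintype.card E = 4 ^ e)
    (S : ℕ → Polynomial E) (hS : ∀ d, S d = ∑ i ∈ Finset.range d, X ^ 4 ^ i)
    (f : Polynomial E) (hf : f = S a + S b + S e + X ^ 2 * S e ^ 2 + S b * S e ^ 3)
    (hae : 2 ∣ a + e) (hgcd : Int.gcd (e : ℤ) ((a : ℤ) - (b : ℤ)) = 1)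
    (u v : Polynomial E)
    (hu : (X + 1) ^ 2 * u = X ^ (2 * a) + X ^ 3 + X + 1)
    (hv : (X + 1) * v = X ^ e + 1)
    (huv : IsCoprime u v) :
    Function.Bijective fun x : E => f.eval x := by
  have := charP_two_of_card_eq_four_pow E hE
  let := ZMod.algebra E 2
  have hK (x : E) : x ^ 4 ^ e = x := hE ▸ FiniteField.pow_card x
  have hf_eval : (fun x : E => f.eval x) = fMap E a b e := by
    ext x
    simp [hf, hS, fMap, eval_finsetSum, partialTrace_apply]
  have hX1 : (X + 1 : E[X]) ≠ 0 := X_add_C_ne_zero 1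
  have hv' : v = ∑ i ∈ range e, X ^ i :=
    mul_left_cancel₀ hX1 (by rw [hv, mul_comm, CharTwo.geom_sum_mul])
  have hu' : u = X + (∑ i ∈ range a, X ^ i) ^ 2 := by
    refine mul_left_cancel₀ (pow_ne_zero 2 hX1) ?_
    rw [hu]
    linear_combination (-((∑ i ∈ range a, (X : E[X]) ^ i) * (X + 1) + X ^ a + 1)) *
      CharTwo.geom_sum_mul (X : E[X]) a - (X ^ a + X ^ 2) * CharTwo.two_eq_zero (R := E[X])
  have huv₀ : IsCoprime (X + (∑ i ∈ range a, X ^ i) ^ 2 : (ZMod 2)[X]) (∑ i ∈ range e, X ^ i) :=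
    (isCoprime_map (algebraMap (ZMod 2) E)).mp (by simpa [hu', hv', Polynomial.map_sum] using huv)
  rw [hf_eval]
  exact Finite.injective_iff_bijective.mp (fMap_injective hK hae hgcd huv₀)

/-- Generalization of Proposition 3.6: for `q = 4`, `f = S_a + S_b + S_e + X²S_e² + S_bS_e³`
is a permutation polynomial of `F_{4^e}` provided `2 ∣ (a+e)`, `gcd(e, a−b) = 1`, and
`gcd((X^{2a}+X³+X+1)/(X+1)², (X^e+1)/(X+1)) = 1`. -/
theorem stmt19 (e a b : ℕ) (he : 0 < e) (ha : 0 < a) (hb : 0 < b)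
    (E : Type*) [Field E] [Fintype E] (hE : Fintype.card E = 4 ^ e)
    (S : ℕ → Polynomial E) (hS : ∀ d, S d = ∑ i ∈ Finset.range d, X ^ 4 ^ i)
    (f : Polynomial E) (hf : f = S a + S b + S e + X ^ 2 * S e ^ 2 + S b * S e ^ 3)
    (hae : 2 ∣ a + e) (hgcd : Int.gcd (e : ℤ) ((a : ℤ) - (b : ℤ)) = 1)
    (u v : Polynomial E)
    (hu : (X + 1) ^ 2 * u = X ^ (2 * a) + X ^ 3 + X + 1)
    (hv : (X + 1) * v = X ^ e + 1)
    (huv : IsCoprime u v) :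
    Function.Bijective fun x : E => f.eval x :=
  stmt19_general e a b E hE S hS f hf hae hgcd u v hu hv huv
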